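/- In a two-terminal series-parallel graph, for any two distinct s-t flows f and f̃ of the same value, there exists an (f, f̃)-good pair of subgraphs, i.e., subgraphs H₁, H₂ whose parallel join is a node of the decomposition tree, with f_e ≥ f̃_e on all edges of H₁, f_e ≤ f̃_e on all edges of H₂, val(f_{H₁}) > val(f̃_{H₁}), and val(f_{H₂}) < val(f̃_{H₂}). -/

import Mathlib

/-- Two-terminal series-parallel graphs, given by their binary decomposition tree. -/
inductive SPG : Type
  | edge : SPG
  | series : SPG → SPG → SPG
  | parallel : SPG → SPG → SPG

namespace SPG

/-- The edge set of a series-parallel graph (the leaves of the decomposition tree). -/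
def E : SPG → Type
  | .edge => Unit
  | .series a b => a.E ⊕ b.E
  | .parallel a b => a.E ⊕ b.E

/-- The value (between the two terminals) of an edge vector on a series-parallel graph. -/
def val : (G : SPG) → (G.E → ℝ) → ℝ
  | .edge, f => f ()
  | .series a _, f => a.val (f ∘ Sum.inl)
  | .parallel a b, f => a.val (f ∘ Sum.inl) + b.val (f ∘ Sum.inr)

/-- `f` is an `s`-`t` flow on the series-parallel graph `G`: it is nonnegative and
satisfies flow conservation (in a series join both parts carry the same value). -/
def IsFlow : (G : SPG) → (G.E → ℝ) → Prop
  | .edge, f => 0 ≤ f ()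
  | .series a b, f => a.IsFlow (f ∘ Sum.inl) ∧ b.IsFlow (f ∘ Sum.inr) ∧
      a.val (f ∘ Sum.inl) = b.val (f ∘ Sum.inr)
  | .parallel a b, f => a.IsFlow (f ∘ Sum.inl) ∧ b.IsFlow (f ∘ Sum.inr)

/-- There is an `(f, f̃)`-good pair of subgraphs of `G`: two subgraphs `H₁`, `H₂`
whose parallel join is a node of the decomposition tree, with `f ≥ f̃` edgewise on
`H₁`, `f ≤ f̃` edgewise on `H₂`, `val(f_{H₁}) > val(f̃_{H₁})` and
`val(f_{H₂}) < val(f̃_{H₂})`. -/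
def GoodPair : (G : SPG) → (G.E → ℝ) → (G.E → ℝ) → Prop
  | .edge, _, _ => False
  | .series a b, f, g =>
      a.GoodPair (f ∘ Sum.inl) (g ∘ Sum.inl) ∨ b.GoodPair (f ∘ Sum.inr) (g ∘ Sum.inr)
  | .parallel a b, f, g =>
      a.GoodPair (f ∘ Sum.inl) (g ∘ Sum.inl) ∨ b.GoodPair (f ∘ Sum.inr) (g ∘ Sum.inr) ∨
      ((∀ e, g (Sum.inl e) ≤ f (Sum.inl e)) ∧ (∀ e, f (Sum.inr e) ≤ g (Sum.inr e)) ∧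
        a.val (g ∘ Sum.inl) < a.val (f ∘ Sum.inl) ∧ b.val (f ∘ Sum.inr) < b.val (g ∘ Sum.inr)) ∨
      ((∀ e, g (Sum.inr e) ≤ f (Sum.inr e)) ∧ (∀ e, f (Sum.inl e) ≤ g (Sum.inl e)) ∧
        b.val (g ∘ Sum.inr) < b.val (f ∘ Sum.inr) ∧ a.val (f ∘ Sum.inl) < a.val (g ∘ Sum.inl))

end SPG

/-! On flows the value is strictly monotone for the edgewise order; at a series node this uses
conservation, as the value is read off the first part only. By induction on the decomposition
tree, two flows either admit a good pair or are edgewise comparable. The only obstruction is a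
node whose two parts are compared in opposite ("crossed") directions: at a series node
conservation then forces equal values on both parts, hence equality on the first part by strict
monotonicity; at a parallel node either one part agrees, or both comparisons are strict and form
a good pair. Finally, comparable distinct flows have distinct values. -/

namespace Sum

variable {α β γ : Type*} [Preorder γ] {f g : α ⊕ β → γ}

lemma le_of_comp_inl_le_of_comp_inr_le (hl : g ∘ inl ≤ f ∘ inl) (hr : g ∘ inr ≤ f ∘ inr) :
    g ≤ f
  | inl a => hl a
  | inr b => hr b

lemma comp_inl_lt_or_comp_inr_lt (h : g < f) : g ∘ inl < f ∘ inl ∨ g ∘ inr < f ∘ inr := by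
  obtain ⟨hle, i | i, hi⟩ := Pi.lt_def.1 h
  · exact .inl (Pi.lt_def.2 ⟨fun _ => hle _, i, hi⟩)
  · exact .inr (Pi.lt_def.2 ⟨fun _ => hle _, i, hi⟩)

end Sum

namespace SPG

open Sum

theorem val_mono {G : SPG} {f g : G.E → ℝ} (h : g ≤ f) : G.val g ≤ G.val f := by
  induction G with
  | edge => exact h ()
  | series a b iha _ => exact iha fun e => h (inl e)
  | parallel a b iha ihb => exact add_le_add (iha fun e => h (inl e)) (ihb fun e => h (inr e))

theorem val_strictMono_of_isFlow {G : SPG} {f g : G.E → ℝ} (hf : G.IsFlow f) (hg : G.IsFlow g)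
    (h : g < f) : G.val g < G.val f := by
  induction G with
  | edge =>
    obtain ⟨-, ⟨⟩, h⟩ := Pi.lt_def.1 h
    exact h
  | series a b iha ihb =>
    obtain ⟨hfa, hfb, hf_cons⟩ := hf
    obtain ⟨hga, hgb, hg_cons⟩ := hg
    change a.val (g ∘ inl) < a.val (f ∘ inl)
    rcases comp_inl_lt_or_comp_inr_lt h with hl | hr
    · exact iha hfa hga hl
    · rw [hf_cons, hg_cons]
      exact ihb hfb hgb hr
  | parallel a b iha ihb =>
    obtain ⟨hfa, hfb⟩ := hf
    obtain ⟨hga, hgb⟩ := hg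
    rcases comp_inl_lt_or_comp_inr_lt h with hl | hr
    · exact add_lt_add_of_lt_of_le (iha hfa hga hl) (val_mono fun e => h.le (inr e))
    · exact add_lt_add_of_le_of_lt (val_mono fun e => h.le (inl e)) (ihb hfb hgb hr)

theorem eq_of_le_of_val_le {G : SPG} {f g : G.E → ℝ} (hf : G.IsFlow f) (hg : G.IsFlow g)
    (h : g ≤ f) (hv : G.val f ≤ G.val g) : g = f :=
  h.eq_of_not_lt fun hlt => (val_strictMono_of_isFlow hf hg hlt).not_ge hv

theorem GoodPair.symm {G : SPG} {f g : G.E → ℝ} (h : G.GoodPair f g) : G.GoodPair g f := by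
  induction G with
  | edge => exact h
  | series a b iha ihb => exact h.imp iha ihb
  | parallel a b iha ihb =>
    rcases h with h | h | ⟨hl, hr, hvl, hvr⟩ | ⟨hr, hl, hvr, hvl⟩
    · exact .inl (iha h)
    · exact .inr (.inl (ihb h))
    · exact .inr (.inr (.inr ⟨hr, hl, hvr, hvl⟩))
    · exact .inr (.inr (.inl ⟨hl, hr, hvl, hvr⟩))

theorem le_of_crossed_series {a b : SPG} {f g : (series a b).E → ℝ} (hf : (series a b).IsFlow f)
    (hg : (series a b).IsFlow g) (ha : g ∘ inl ≤ f ∘ inl) (hb : f ∘ inr ≤ g ∘ inr) : f ≤ g := by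
  obtain ⟨hfa, -, hf_cons⟩ := hf
  obtain ⟨hga, -, hg_cons⟩ := hg
  have hva : a.val (f ∘ inl) ≤ a.val (g ∘ inl) := by
    rw [hf_cons, hg_cons]
    exact val_mono hb
  exact le_of_comp_inl_le_of_comp_inr_le (eq_of_le_of_val_le hfa hga ha hva).ge hb

theorem goodPair_or_le_or_le_of_crossed_parallel {a b : SPG} {f g : (parallel a b).E → ℝ}
    (hf : (parallel a b).IsFlow f) (hg : (parallel a b).IsFlow g) (ha : g ∘ inl ≤ f ∘ inl)
    (hb : f ∘ inr ≤ g ∘ inr) : (parallel a b).GoodPair f g ∨ g ≤ f ∨ f ≤ g := by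
  by_cases ha_eq : g ∘ inl = f ∘ inl
  · exact .inr (.inr (le_of_comp_inl_le_of_comp_inr_le ha_eq.ge hb))
  by_cases hb_eq : f ∘ inr = g ∘ inr
  · exact .inr (.inl (le_of_comp_inl_le_of_comp_inr_le ha hb_eq.ge))
  exact .inl (.inr (.inr (.inl ⟨fun e => ha e, fun e => hb e,
    val_strictMono_of_isFlow hf.1 hg.1 (lt_of_le_of_ne ha ha_eq),
    val_strictMono_of_isFlow hg.2 hf.2 (lt_of_le_of_ne hb hb_eq)⟩)))

theorem goodPair_or_le_or_le {G : SPG} {f g : G.E → ℝ} (hf : G.IsFlow f) (hg : G.IsFlow g) :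
    G.GoodPair f g ∨ g ≤ f ∨ f ≤ g := by
  induction G with
  | edge => exact .inr ((le_total (g ()) (f ())).imp (fun h _ => h) (fun h _ => h))
  | series a b iha ihb =>
    rcases iha hf.1 hg.1 with ha | ha | ha
    · exact .inl (.inl ha)
    all_goals rcases ihb hf.2.1 hg.2.1 with hb | hb | hb
    · exact .inl (.inr hb)
    · exact .inr (.inl (le_of_comp_inl_le_of_comp_inr_le ha hb))
    · exact .inr (.inr (le_of_crossed_series hf hg ha hb))
    · exact .inl (.inr hb)
    · exact .inr (.inl (le_of_crossed_series hg hf ha hb))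
    · exact .inr (.inr (le_of_comp_inl_le_of_comp_inr_le ha hb))
  | parallel a b iha ihb =>
    rcases iha hf.1 hg.1 with ha | ha | ha
    · exact .inl (.inl ha)
    all_goals rcases ihb hf.2 hg.2 with hb | hb | hb
    · exact .inl (.inr (.inl hb))
    · exact .inr (.inl (le_of_comp_inl_le_of_comp_inr_le ha hb))
    · exact goodPair_or_le_or_le_of_crossed_parallel hf hg ha hb
    · exact .inl (.inr (.inl hb))
    · exact (goodPair_or_le_or_le_of_crossed_parallel hg hf ha hb).imp GoodPair.symm Or.symm
    · exact .inr (.inr (le_of_comp_inl_le_of_comp_inr_le ha hb))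

end SPG

/-- Lemma 5.2: any two distinct `s`-`t` flows of the same value on a series-parallel
graph admit an `(f, f̃)`-good pair of subgraphs. -/
theorem spg_good_pair_exists (G : SPG) (f ft : G.E → ℝ)
    (hf : G.IsFlow f) (hft : G.IsFlow ft)
    (hval : G.val f = G.val ft) (hne : f ≠ ft) :
    G.GoodPair f ft := by
  rcases SPG.goodPair_or_le_or_le hf hft with h | h | h
  · exact h
  · exact absurd (SPG.eq_of_le_of_val_le hf hft h hval.le) hne.symm
  · exact absurd (SPG.eq_of_le_of_val_le hft hf h hval.ge) hne
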